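/- arXiv:1709.07825 — 4 statements merged into one kernel-verified Lean document; each statement's English description precedes it below -/
import Mathlib

section
/- Fix a prime power q and integer D ≥ 1, and let κ' = i·q^{-D/2} (i the imaginary unit). For 1 ≤ j ≤ D-1, let t'(j) be the 2×2 complex matrix i·times the matrix with rows (q^{-D/2}(q^D - q^j + 1), q^{D/2}(q^{j-D} - 1)) and (q^{-D/2}(1 - q^j), q^{j-D/2}). Then (t'(j) - κ'·I)(t'(j) + κ'^{-1}·I) = 0. -/
/-!
By Cayley–Hamilton, `A² - (tr A) A + det A = 0` for a `2 × 2` matrix, so `(A - κ)(A + κ⁻¹) = 0`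
as soon as `tr A = κ - κ⁻¹` and `det A = -1`. With `s = q^{-D/2}` every real power occurring in
`t'(j)` is one of `s`, `s⁻¹`, `q^j s`, `q^j s²`, and trace and determinant then reduce to
polynomial identities that follow from `q^D s² = 1` and `i² = -1` alone.
-/

namespace Matrix

theorem sq_sub_trace_smul_add_det_smul_fin_two {R : Type*} [CommRing R] [Nontrivial R]
    (A : Matrix (Fin 2) (Fin 2) R) :
    A ^ 2 - A.trace • A + A.det • (1 : Matrix (Fin 2) (Fin 2) R) = 0 := by
  simpa [charpoly_fin_two, Algebra.smul_def] using A.aeval_self_charpoly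

theorem sub_smul_one_mul_add_inv_smul_one_eq_zero_fin_two {K : Type*} [Field K]
    {A : Matrix (Fin 2) (Fin 2) K} {a : K} (ha : a ≠ 0)
    (htr : A.trace = a - a⁻¹) (hdet : A.det = -1) :
    (A - a • (1 : Matrix (Fin 2) (Fin 2) K)) * (A + a⁻¹ • 1) = 0 :=
  calc (A - a • (1 : Matrix (Fin 2) (Fin 2) K)) * (A + a⁻¹ • 1)
      = A ^ 2 - (a - a⁻¹) • A + (-1 : K) • 1 := by
        simp only [sub_mul, mul_add, smul_mul_smul, mul_inv_cancel₀ ha, sq, sub_smul,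
          Matrix.mul_one, Matrix.one_mul, Matrix.mul_smul, Matrix.smul_mul, one_smul, neg_smul]
        abel
    _ = 0 := htr ▸ hdet ▸ A.sq_sub_trace_smul_add_det_smul_fin_two

end Matrix

section Block

variable {K : Type*} [Field K]

/-- `t'(j)` is `tBlock i (q^{-D/2}) (q^D) (q^j)`. -/
def tBlock (i s Q p : K) : Matrix (Fin 2) (Fin 2) K :=
  i • !![s * (Q - p + 1), s⁻¹ * (p * s ^ 2 - 1); s * (1 - p), p * s]

variable {i s Q : K} (p : K)

theorem trace_tBlock (hi : i * i = -1) (hs : s ≠ 0) (hQ : Q * s ^ 2 = 1) :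
    (tBlock i s Q p).trace = i * s - (i * s)⁻¹ := by
  have hi0 : i ≠ 0 := left_ne_zero_of_mul (hi ▸ neg_ne_zero.mpr one_ne_zero)
  rw [tBlock, Matrix.trace_smul, Matrix.trace_fin_two_of, smul_eq_mul]
  field_simp
  linear_combination hi + i ^ 2 * hQ

theorem det_tBlock (hi : i * i = -1) (hs : s ≠ 0) (hQ : Q * s ^ 2 = 1) :
    (tBlock i s Q p).det = -1 := by
  rw [tBlock, Matrix.det_smul, Matrix.det_fin_two_of, Fintype.card_fin]
  field_simp
  linear_combination hi + i ^ 2 * p * hQ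

end Block

section Rpow

variable {x : ℝ}

theorem Real.rpow_neg_half_sq (hx : 0 < x) (D : ℕ) : (x ^ (-(D : ℝ) / 2)) ^ 2 = (x ^ D)⁻¹ := by
  rw [← Real.rpow_mul_natCast hx.le, ← Real.rpow_natCast, ← Real.rpow_neg hx.le]
  ring_nf

theorem Real.rpow_half_eq_inv (hx : 0 < x) (D : ℕ) :
    x ^ ((D : ℝ) / 2) = (x ^ (-(D : ℝ) / 2))⁻¹ := by
  rw [neg_div, Real.rpow_neg hx.le, inv_inv]

theorem Real.rpow_sub_half_eq (hx : 0 < x) (j D : ℕ) :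
    x ^ ((j : ℝ) - (D : ℝ) / 2) = x ^ j * x ^ (-(D : ℝ) / 2) := by
  rw [sub_eq_add_neg, Real.rpow_add hx, Real.rpow_natCast, neg_div]

theorem Real.rpow_sub_eq (hx : 0 < x) (j D : ℕ) :
    x ^ ((j : ℝ) - D) = x ^ j * (x ^ (-(D : ℝ) / 2)) ^ 2 := by
  rw [← Real.rpow_mul_natCast hx.le, sub_eq_add_neg, Real.rpow_add hx, Real.rpow_natCast]
  ring_nf

end Rpow

theorem stmt_8_general (q : ℕ) (hpp : IsPrimePow q) (D : ℕ)
    (κ' : ℂ) (hκ' : κ' = Complex.I * (((q : ℝ) ^ (-(D : ℝ) / 2) : ℝ) : ℂ))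
    (t' : ℕ → Matrix (Fin 2) (Fin 2) ℂ)
    (ht' : ∀ j, 1 ≤ j → j ≤ D - 1 → t' j = Complex.I •
      !![(((q : ℝ) ^ (-(D : ℝ) / 2) : ℝ) : ℂ) * ((q : ℂ) ^ D - (q : ℂ) ^ j + 1),
         (((q : ℝ) ^ ((D : ℝ) / 2) : ℝ) : ℂ) * ((((q : ℝ) ^ ((j : ℝ) - (D : ℝ)) : ℝ) : ℂ) - 1);
         (((q : ℝ) ^ (-(D : ℝ) / 2) : ℝ) : ℂ) * (1 - (q : ℂ) ^ j),
         (((q : ℝ) ^ ((j : ℝ) - (D : ℝ) / 2) : ℝ) : ℂ)]) :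
    ∀ j, 1 ≤ j → j ≤ D - 1 →
      (t' j - κ' • (1 : Matrix (Fin 2) (Fin 2) ℂ)) *
        (t' j + κ'⁻¹ • (1 : Matrix (Fin 2) (Fin 2) ℂ)) = 0 := by
  intro j hj1 hj2
  have hq : (0 : ℝ) < q := by exact_mod_cast hpp.pos
  have hblock : t' j = tBlock Complex.I (((q : ℝ) ^ (-(D : ℝ) / 2) : ℝ) : ℂ) ((q : ℂ) ^ D)
      ((q : ℂ) ^ j) := by
    rw [ht' j hj1 hj2, tBlock, Real.rpow_half_eq_inv hq, Real.rpow_sub_eq hq,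
      Real.rpow_sub_half_eq hq]
    push_cast
    rfl
  have hs : (((q : ℝ) ^ (-(D : ℝ) / 2) : ℝ) : ℂ) ≠ 0 := by
    exact_mod_cast (Real.rpow_pos_of_pos hq _).ne'
  have hsq : (q : ℂ) ^ D * (((q : ℝ) ^ (-(D : ℝ) / 2) : ℝ) : ℂ) ^ 2 = 1 := by
    rw [← Complex.ofReal_pow, Real.rpow_neg_half_sq hq]
    push_cast
    exact mul_inv_cancel₀ (pow_ne_zero D (by exact_mod_cast hpp.ne_zero))
  rw [hblock, hκ']
  exact Matrix.sub_smul_one_mul_add_inv_smul_one_eq_zero_fin_two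
    (mul_ne_zero Complex.I_ne_zero hs) (trace_tBlock _ Complex.I_mul_I hs hsq)
    (det_tBlock _ Complex.I_mul_I hs hsq)

/-- the blocks `t'(j)`, `1 ≤ j ≤ D-1`, satisfy `(t'(j) - κ')(t'(j) + κ'⁻¹) = 0`
with `κ' = i·q^{-D/2}`. -/
theorem stmt_8 (q : ℕ) (hpp : IsPrimePow q) (D : ℕ) (hD : 1 ≤ D)
    (κ' : ℂ) (hκ' : κ' = Complex.I * (((q : ℝ) ^ (-(D : ℝ) / 2) : ℝ) : ℂ))
    (t' : ℕ → Matrix (Fin 2) (Fin 2) ℂ)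
    (ht' : ∀ j, 1 ≤ j → j ≤ D - 1 → t' j = Complex.I •
      !![(((q : ℝ) ^ (-(D : ℝ) / 2) : ℝ) : ℂ) * ((q : ℂ) ^ D - (q : ℂ) ^ j + 1),
         (((q : ℝ) ^ ((D : ℝ) / 2) : ℝ) : ℂ) * ((((q : ℝ) ^ ((j : ℝ) - (D : ℝ)) : ℝ) : ℂ) - 1);
         (((q : ℝ) ^ (-(D : ℝ) / 2) : ℝ) : ℂ) * (1 - (q : ℂ) ^ j),
         (((q : ℝ) ^ ((j : ℝ) - (D : ℝ) / 2) : ℝ) : ℂ)]) :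
    ∀ j, 1 ≤ j → j ≤ D - 1 →
      (t' j - κ' • (1 : Matrix (Fin 2) (Fin 2) ℂ)) *
        (t' j + κ'⁻¹ • (1 : Matrix (Fin 2) (Fin 2) ℂ)) = 0 :=
  stmt_8_general q hpp D κ' hκ' t' ht'
end

section
/- Let q be a prime power, D ≥ 3, e ≥ 0 with q^e defined, and τ = i·q^{-(D+e)/2}. Define the 2D × 2D block-diagonal matrices 𝔱 = blockdiag(t(0),...,t(D-1)) with each t(j) the 2×2 matrix with rows (q^{-e/2} - q^{e/2}, q^{e/2}), (q^{-e/2}, 0), and 𝔱' = blockdiag(t'(0),...,t'(D)) with t'(0) = t'(D) = (i·q^{-D/2}) (1×1) and t'(j) (1 ≤ j ≤ D-1) the 2×2 matrix i times ((q^{-D/2}(q^D-q^j+1), q^{D/2}(q^{j-D}-1)), (q^{-D/2}(1-q^j), q^{j-D/2})). Then 𝔵 := 𝔱'𝔱 is invertible, and with 𝔲 = blockdiag(u(0),...,u(D)) where u(0) = (0), u(D) = (-1), and u(j) = ((-1, 1-q^{D-j}), (0,0)), and 𝔲' = blockdiag(u'(0),...,u'(D-1)) with u'(j) = ((0,0),(-i·q^{(D-e)/2-j},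 0)), one has 𝔵·𝔲' = 𝔲 + I. -/
noncomputable section

/-- `q` raised to a real power, as a complex number. -/
def rr (q : ℕ) (x : ℝ) : ℂ := (((q : ℝ) ^ x : ℝ) : ℂ)

/-- Entries of the 2×2 block `t(j)` (the same for all `j`):
rows `(q^{-e/2} - q^{e/2}, q^{e/2})` and `(q^{-e/2}, 0)`. -/
def tEnt (q : ℕ) (e : ℝ) : ℕ → ℕ → ℂ := fun a b =>
  if a = 0 then (if b = 0 then rr q (-e / 2) - rr q (e / 2) else rr q (e / 2))
  else (if b = 0 then rr q (-e / 2) else 0)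

/-- Entries of the 2×2 block `t'(j)` for `1 ≤ j ≤ D-1`. -/
def tpEnt (q D : ℕ) (j : ℕ) : ℕ → ℕ → ℂ := fun a b =>
  Complex.I *
    (if a = 0 then
      (if b = 0 then rr q (-(D : ℝ) / 2) * ((q : ℂ) ^ D - (q : ℂ) ^ j + 1)
       else rr q ((D : ℝ) / 2) * (rr q ((j : ℝ) - (D : ℝ)) - 1))
     else
      (if b = 0 then rr q (-(D : ℝ) / 2) * (1 - (q : ℂ) ^ j)
       else rr q ((j : ℝ) - (D : ℝ) / 2)))

/-- Entries of the 2×2 block `u(j)` for `1 ≤ j ≤ D-1`: rows `(-1, 1-q^{D-j})`, `(0,0)`. -/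
def uEnt (q D : ℕ) (j : ℕ) : ℕ → ℕ → ℂ := fun a b =>
  if a = 0 then (if b = 0 then -1 else 1 - (q : ℂ) ^ (D - j)) else 0

/-- Entries of the 2×2 block `u'(j)`: rows `(0,0)`, `(-i·q^{(D-e)/2 - j}, 0)`. -/
def upEnt (q D : ℕ) (e : ℝ) (j : ℕ) : ℕ → ℕ → ℂ := fun a b =>
  if a = 1 ∧ b = 0 then -Complex.I * rr q (((D : ℝ) - e) / 2 - (j : ℝ)) else 0

/-- The `2D × 2D` block-diagonal matrix `𝔱 = blockdiag(t(0), …, t(D-1))`,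
with blocks of size 2 at indices `{2j, 2j+1}`. -/
def frakT (q D : ℕ) (e : ℝ) : Matrix (Fin (2 * D)) (Fin (2 * D)) ℂ :=
  Matrix.of fun i k =>
    if (i : ℕ) / 2 = (k : ℕ) / 2 then tEnt q e ((i : ℕ) % 2) ((k : ℕ) % 2) else 0

/-- The `2D × 2D` block-diagonal matrix `𝔲' = blockdiag(u'(0), …, u'(D-1))`,
with blocks of size 2 at indices `{2j, 2j+1}`. -/
def frakUp (q D : ℕ) (e : ℝ) : Matrix (Fin (2 * D)) (Fin (2 * D)) ℂ :=
  Matrix.of fun i k =>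
    if (i : ℕ) / 2 = (k : ℕ) / 2 then upEnt q D e ((i : ℕ) / 2) ((i : ℕ) % 2) ((k : ℕ) % 2)
    else 0

/-- The `2D × 2D` block-diagonal matrix `𝔱' = blockdiag(t'(0), t'(1), …, t'(D-1), t'(D))`,
where `t'(0) = t'(D) = (i·q^{-D/2})` are `1×1` blocks (at indices `0` and `2D-1`) and the
middle blocks `t'(j)`, `1 ≤ j ≤ D-1`, are `2×2` (at indices `{2j-1, 2j}`). -/
def frakTp (q D : ℕ) : Matrix (Fin (2 * D)) (Fin (2 * D)) ℂ :=
  Matrix.of fun i k =>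
    if (i : ℕ) = 0 then (if (k : ℕ) = 0 then Complex.I * rr q (-(D : ℝ) / 2) else 0)
    else if (i : ℕ) = 2 * D - 1 then
      (if (k : ℕ) = 2 * D - 1 then Complex.I * rr q (-(D : ℝ) / 2) else 0)
    else if (k : ℕ) = 0 ∨ (k : ℕ) = 2 * D - 1 then 0
    else if ((i : ℕ) + 1) / 2 = ((k : ℕ) + 1) / 2 then
      tpEnt q D (((i : ℕ) + 1) / 2) (((i : ℕ) + 1) % 2) (((k : ℕ) + 1) % 2)
    else 0

/-- The `2D × 2D` block-diagonal matrix `𝔲 = blockdiag(u(0), u(1), …, u(D-1), u(D))`,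
where `u(0) = (0)` and `u(D) = (-1)` are `1×1` blocks and the middle blocks are `2×2`. -/
def frakU (q D : ℕ) : Matrix (Fin (2 * D)) (Fin (2 * D)) ℂ :=
  Matrix.of fun i k =>
    if (i : ℕ) = 0 then 0
    else if (i : ℕ) = 2 * D - 1 then (if (k : ℕ) = 2 * D - 1 then -1 else 0)
    else if (k : ℕ) = 0 ∨ (k : ℕ) = 2 * D - 1 then 0
    else if ((i : ℕ) + 1) / 2 = ((k : ℕ) + 1) / 2 then
      uEnt q D (((i : ℕ) + 1) / 2) (((i : ℕ) + 1) % 2) (((k : ℕ) + 1) % 2)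
    else 0

lemma rr_mul {q : ℕ} (hq : q ≠ 0) (x y : ℝ) : rr q x * rr q y = rr q (x + y) := by
  have : (0:ℝ) < q := by positivity
  simp [rr, ← Complex.ofReal_mul, ← Real.rpow_add this]

lemma rr_zero (q : ℕ) : rr q 0 = 1 := by simp [rr]

lemma rr_ne {q : ℕ} (hq : q ≠ 0) (x : ℝ) : rr q x ≠ 0 := by
  have : (0:ℝ) < q := by positivity
  simp [rr]; positivity

lemma sum_pair' {n : ℕ} (f : Fin n → ℂ) (a b : Fin n) (hab : a ≠ b)
    (h : ∀ j, j ≠ a → j ≠ b → f j = 0) : ∑ j, f j = f a + f b := by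
  rw [← Finset.sum_subset (Finset.subset_univ {a, b})]
  · rw [Finset.sum_pair hab]
  · intro x _ hx
    simp only [Finset.mem_insert, Finset.mem_singleton, not_or] at hx
    exact h x hx.1 hx.2

def tInvEnt (q : ℕ) (e : ℝ) : ℕ → ℕ → ℂ := fun a b =>
  if a = 0 then (if b = 0 then 0 else rr q (e / 2))
  else (if b = 0 then rr q (-e / 2) else rr q (e / 2) - rr q (-e / 2))

def frakTinv (q D : ℕ) (e : ℝ) : Matrix (Fin (2 * D)) (Fin (2 * D)) ℂ :=
  Matrix.of fun i k =>
    if (i : ℕ) / 2 = (k : ℕ) / 2 then tInvEnt q e ((i : ℕ) % 2) ((k : ℕ) % 2) else 0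

lemma rr_cancel {q : ℕ} (hq : q ≠ 0) {x y : ℝ} (h : x + y = 0) : rr q x * rr q y = 1 := by
  rw [rr_mul hq, h]; exact rr_zero q

lemma lemA {q D : ℕ} (hq : q ≠ 0) (e : ℝ) : frakT q D e * frakTinv q D e = 1 := by
  ext i k
  rw [Matrix.mul_apply]
  have hi := i.isLt
  have hk := k.isLt
  rw [sum_pair' _ ⟨2 * ((i:ℕ)/2), by omega⟩ ⟨2 * ((i:ℕ)/2) + 1, by omega⟩
      (by simp [Fin.ext_iff]) ?h0]
  case h0 =>
    intro j hj1 hj2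
    have h1 : (j:ℕ) ≠ 2 * ((i:ℕ)/2) := fun h => hj1 (Fin.ext h)
    have h2 : (j:ℕ) ≠ 2 * ((i:ℕ)/2) + 1 := fun h => hj2 (Fin.ext h)
    have : (i:ℕ)/2 ≠ (j:ℕ)/2 := by omega
    simp [frakT, this]
  have e1 : (2 * ((i:ℕ)/2)) / 2 = (i:ℕ)/2 := by omega
  have e2 : (2 * ((i:ℕ)/2)) % 2 = 0 := by omega
  have e3 : (2 * ((i:ℕ)/2) + 1) / 2 = (i:ℕ)/2 := by omega
  have e4 : (2 * ((i:ℕ)/2) + 1) % 2 = 1 := by omega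
  simp only [frakT, frakTinv, Matrix.of_apply, e1, e2, e3, e4, if_pos rfl, Matrix.one_apply]
  by_cases hik : (i:ℕ)/2 = (k:ℕ)/2
  · have hik' : ¬ (i = k) ↔ ¬ ((i:ℕ) % 2 = (k:ℕ) % 2) := by
      constructor
      · intro h h2; exact h (Fin.ext (by omega))
      · intro h h2; exact h (by rw [h2])
    simp only [if_pos rfl, hik, if_pos rfl]
    rcases Nat.mod_two_eq_zero_or_one (i:ℕ) with ha | ha <;>
      rcases Nat.mod_two_eq_zero_or_one (k:ℕ) with hb | hb <;>
        simp only [ha, hb, tEnt, tInvEnt, if_pos rfl, if_true] <;> norm_num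
    · rw [if_pos (Fin.ext (by omega)), rr_cancel hq (by ring)]
    · rw [if_neg (by intro h; rw [h] at ha; omega)]
      rw [mul_comm]; ring
    · intro h; rw [h] at ha; omega
    · rw [if_pos (Fin.ext (by omega))]
      rw [mul_comm, rr_cancel hq (by ring)]
  · have : ¬ (i = k) := fun h => hik (by rw [h])
    simp [hik, this]

def dDiag (q D : ℕ) : Fin (2 * D) → ℂ := fun k =>
  if (k : ℕ) % 2 = 0 then -Complex.I * rr q ((D : ℝ) / 2 - (((k : ℕ) / 2 : ℕ) : ℝ)) else 0

lemma lemC {q D : ℕ} (hq : q ≠ 0) (e : ℝ) :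
    frakT q D e * frakUp q D e = Matrix.diagonal (dDiag q D) := by
  ext i k
  rw [Matrix.mul_apply]
  have hi := i.isLt
  have hk := k.isLt
  rw [sum_pair' _ ⟨2 * ((i:ℕ)/2), by omega⟩ ⟨2 * ((i:ℕ)/2) + 1, by omega⟩
      (by simp [Fin.ext_iff]) ?h0]
  case h0 =>
    intro j hj1 hj2
    have h1 : (j:ℕ) ≠ 2 * ((i:ℕ)/2) := fun h => hj1 (Fin.ext h)
    have h2 : (j:ℕ) ≠ 2 * ((i:ℕ)/2) + 1 := fun h => hj2 (Fin.ext h)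
    have : (i:ℕ)/2 ≠ (j:ℕ)/2 := by omega
    simp [frakT, this]
  have e1 : (2 * ((i:ℕ)/2)) / 2 = (i:ℕ)/2 := by omega
  have e2 : (2 * ((i:ℕ)/2)) % 2 = 0 := by omega
  have e3 : (2 * ((i:ℕ)/2) + 1) / 2 = (i:ℕ)/2 := by omega
  have e4 : (2 * ((i:ℕ)/2) + 1) % 2 = 1 := by omega
  simp only [frakT, frakUp, Matrix.of_apply, e1, e2, e3, e4, eq_self_iff_true, if_true]
  rw [Matrix.diagonal_apply]
  have hu0 : ∀ b, upEnt q D e ((i:ℕ)/2) 0 b = 0 := by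
    intro b; simp [upEnt]
  by_cases hik : (i:ℕ)/2 = (k:ℕ)/2
  · rw [if_pos hik, if_pos hik, hu0, mul_zero, zero_add]
    rcases Nat.mod_two_eq_zero_or_one (k:ℕ) with hb | hb
    · rw [hb]
      rcases Nat.mod_two_eq_zero_or_one (i:ℕ) with ha | ha
      · have hik2 : i = k := Fin.ext (by omega)
        rw [if_pos hik2]
        simp only [tEnt, upEnt, ha, dDiag, if_true, eq_self_iff_true, one_ne_zero, if_false,
          and_self]
        rw [show rr q (e/2) * (-Complex.I * rr q (((D:ℝ) - e)/2 - (((i:ℕ)/2 : ℕ):ℝ)))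
            = -Complex.I * (rr q (e/2) * rr q (((D:ℝ) - e)/2 - (((i:ℕ)/2 : ℕ):ℝ))) by ring,
          rr_mul hq, show e/2 + (((D:ℝ) - e)/2 - (((i:ℕ)/2 : ℕ):ℝ))
            = (D:ℝ)/2 - (((i:ℕ)/2 : ℕ):ℝ) by ring]
      · have hik2 : ¬ i = k := fun h => by rw [h] at ha; omega
        rw [if_neg hik2]
        simp [tEnt, ha]
    · rw [hb]
      have hu1 : upEnt q D e ((i:ℕ)/2) 1 1 = 0 := by simp [upEnt]
      rw [hu1, mul_zero]
      by_cases hik2 : i = k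
      · rw [if_pos hik2, dDiag]
        rw [if_neg (by omega : ¬ ((i:ℕ) % 2 = 0))]
      · rw [if_neg hik2]
  · rw [if_neg hik, if_neg hik, if_neg (fun h => hik (by rw [h]))]
    ring

lemma rr_nat (q n : ℕ) : ((q:ℂ)) ^ n = rr q (n : ℝ) := by
  simp [rr, Real.rpow_natCast]

def tpInvEnt (q D : ℕ) (j : ℕ) : ℕ → ℕ → ℂ := fun a b =>
  -Complex.I *
    (if a = 0 then
      (if b = 0 then rr q ((j : ℝ) - (D : ℝ) / 2)
       else -(rr q ((D : ℝ) / 2) * (rr q ((j : ℝ) - (D : ℝ)) - 1)))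
     else
      (if b = 0 then -(rr q (-(D : ℝ) / 2) * (1 - (q : ℂ) ^ j))
       else rr q (-(D : ℝ) / 2) * ((q : ℂ) ^ D - (q : ℂ) ^ j + 1)))

lemma tp_prod {q D : ℕ} (hq : q ≠ 0) (m a b : ℕ) (ha : a < 2) (hb : b < 2) :
    tpEnt q D m a 0 * tpInvEnt q D m 0 b + tpEnt q D m a 1 * tpInvEnt q D m 1 b
      = if a = b then 1 else 0 := by
  have k1 : rr q (-(D:ℝ)/2) * rr q ((m:ℝ) - (D:ℝ)/2) = rr q ((m:ℝ) - (D:ℝ)) := by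
    rw [rr_mul hq, show -(D:ℝ)/2 + ((m:ℝ) - (D:ℝ)/2) = (m:ℝ) - (D:ℝ) by ring]
  have k2 : rr q ((D:ℝ)/2) * rr q (-(D:ℝ)/2) = 1 := rr_cancel hq (by ring)
  have k3 : rr q ((m:ℝ) - (D:ℝ)) * rr q ((D:ℕ):ℝ) = rr q ((m:ℕ):ℝ) := by
    rw [rr_mul hq, show (m:ℝ) - (D:ℝ) + ((D:ℕ):ℝ) = ((m:ℕ):ℝ) by push_cast; ring]
  have hI : Complex.I * Complex.I = -1 := Complex.I_mul_I
  interval_cases a <;> interval_cases b <;>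
    simp only [tpEnt, tpInvEnt, if_true, if_false, eq_self_iff_true, one_ne_zero, zero_ne_one,
      rr_nat q D, rr_nat q m] <;>
    norm_num
  · linear_combination
      (-((rr q (-(D:ℝ)/2) * (rr q ((D:ℝ)) - rr q ((m:ℝ)) + 1)) * rr q ((m:ℝ) - (D:ℝ)/2)
        - (rr q ((D:ℝ)/2) * (rr q ((m:ℝ) - (D:ℝ)) - 1))
          * (rr q (-(D:ℝ)/2) * (1 - rr q ((m:ℝ)))))) * hI
      + (rr q ((D:ℝ)) - rr q ((m:ℝ)) + 1) * k1
      + (-((rr q ((m:ℝ) - (D:ℝ)) - 1) * (1 - rr q ((m:ℝ))))) * k2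
      + k3
  · ring
  · ring
  · linear_combination
      (-((rr q (-(D:ℝ)/2) * (rr q ((D:ℝ)) - rr q ((m:ℝ)) + 1)) * rr q ((m:ℝ) - (D:ℝ)/2)
        - (rr q ((D:ℝ)/2) * (rr q ((m:ℝ) - (D:ℝ)) - 1))
          * (rr q (-(D:ℝ)/2) * (1 - rr q ((m:ℝ)))))) * hI
      + (rr q ((D:ℝ)) - rr q ((m:ℝ)) + 1) * k1
      + (-((rr q ((m:ℝ) - (D:ℝ)) - 1) * (1 - rr q ((m:ℝ))))) * k2
      + k3

def frakTpinv (q D : ℕ) : Matrix (Fin (2 * D)) (Fin (2 * D)) ℂ :=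
  Matrix.of fun i k =>
    if (i : ℕ) = 0 then (if (k : ℕ) = 0 then -Complex.I * rr q ((D : ℝ) / 2) else 0)
    else if (i : ℕ) = 2 * D - 1 then
      (if (k : ℕ) = 2 * D - 1 then -Complex.I * rr q ((D : ℝ) / 2) else 0)
    else if (k : ℕ) = 0 ∨ (k : ℕ) = 2 * D - 1 then 0
    else if ((i : ℕ) + 1) / 2 = ((k : ℕ) + 1) / 2 then
      tpInvEnt q D (((i : ℕ) + 1) / 2) (((i : ℕ) + 1) % 2) (((k : ℕ) + 1) % 2)
    else 0

lemma sum_single' {n : ℕ} (f : Fin n → ℂ) (a : Fin n)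
    (h : ∀ j, j ≠ a → f j = 0) : ∑ j, f j = f a := Fintype.sum_eq_single a h

lemma corner_val {q D : ℕ} (hq : q ≠ 0) :
    Complex.I * rr q (-(D:ℝ)/2) * (-Complex.I * rr q ((D:ℝ)/2)) = 1 := by
  rw [show Complex.I * rr q (-(D:ℝ)/2) * (-Complex.I * rr q ((D:ℝ)/2))
      = -(Complex.I * Complex.I) * (rr q (-(D:ℝ)/2) * rr q ((D:ℝ)/2)) by ring,
    Complex.I_mul_I, rr_cancel hq (by ring)]
  norm_num

lemma lemB {q D : ℕ} (hq : q ≠ 0) (hD : 1 ≤ D) : frakTp q D * frakTpinv q D = 1 := by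
  ext i k
  rw [Matrix.mul_apply, Matrix.one_apply]
  have hi := i.isLt
  have hk := k.isLt
  by_cases hi0 : (i:ℕ) = 0
  · rw [sum_single' _ ⟨0, by omega⟩ ?g0]
    case g0 =>
      intro j hj
      have hjv : (j:ℕ) ≠ 0 := fun h => hj (Fin.ext h)
      simp [frakTp, hi0, hjv]
    simp only [frakTp, frakTpinv, Matrix.of_apply, hi0, eq_self_iff_true, if_true]
    by_cases hk0 : (k:ℕ) = 0
    · rw [if_pos hk0, if_pos (Fin.ext (by omega) : i = k), corner_val hq]
    · rw [if_neg hk0, if_neg (fun h : i = k => hk0 (by rw [← h]; exact hi0)), mul_zero]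
  have hD0 : ¬ ((2:ℕ) * D - 1 = 0) := by omega
  by_cases hi1 : (i:ℕ) = 2 * D - 1
  · rw [sum_single' _ ⟨2 * D - 1, by omega⟩ ?g1]
    case g1 =>
      intro j hj
      have hjv : (j:ℕ) ≠ 2 * D - 1 := fun h => hj (Fin.ext h)
      simp [frakTp, hi0, hi1, hjv, hD0]
    have hv : ((⟨2 * D - 1, by omega⟩ : Fin (2 * D)) : ℕ) = 2 * D - 1 := rfl
    simp only [frakTp, frakTpinv, Matrix.of_apply, hi0, hi1, hv, eq_self_iff_true, if_true,
      if_false, hD0]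
    by_cases hk1 : (k:ℕ) = 2 * D - 1
    · rw [if_pos hk1, if_pos (Fin.ext (by omega) : i = k), corner_val hq]
    · rw [if_neg hk1, if_neg (fun h : i = k => hk1 (by rw [← h]; exact hi1)), mul_zero]
  -- middle rows
  have hm1 : 1 ≤ ((i:ℕ) + 1) / 2 := by omega
  have hm2 : ((i:ℕ) + 1) / 2 ≤ D - 1 := by omega
  rw [sum_pair' _ ⟨2 * (((i:ℕ) + 1) / 2) - 1, by omega⟩ ⟨2 * (((i:ℕ) + 1) / 2), by omega⟩
      (by simp [Fin.ext_iff]; omega) ?g2]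
  case g2 =>
    intro j hj1 hj2
    have hv1 : (j:ℕ) ≠ 2 * (((i:ℕ) + 1) / 2) - 1 := fun h => hj1 (Fin.ext h)
    have hv2 : (j:ℕ) ≠ 2 * (((i:ℕ) + 1) / 2) := fun h => hj2 (Fin.ext h)
    rcases (by omega : ((j:ℕ) = 0 ∨ (j:ℕ) = 2 * D - 1) ∨
        ¬ (((i:ℕ) + 1) / 2 = ((j:ℕ) + 1) / 2)) with h | h
    · simp only [frakTp, Matrix.of_apply, hi0, hi1, if_false, if_pos h, zero_mul]
    · simp only [frakTp, Matrix.of_apply, hi0, hi1, if_false, if_neg h]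
      rcases (by omega : ¬ ((j:ℕ) = 0 ∨ (j:ℕ) = 2 * D - 1) ∨
          ((j:ℕ) = 0 ∨ (j:ℕ) = 2 * D - 1)) with h2 | h2
      · rw [if_neg h2, zero_mul]
      · rw [if_pos h2, zero_mul]
  have f0 : ((⟨2 * (((i:ℕ) + 1) / 2) - 1, by omega⟩ : Fin (2 * D)) : ℕ)
      = 2 * (((i:ℕ) + 1) / 2) - 1 := rfl
  have f0' : ((⟨2 * (((i:ℕ) + 1) / 2), by omega⟩ : Fin (2 * D)) : ℕ)
      = 2 * (((i:ℕ) + 1) / 2) := rfl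
  have f1 : (2 * (((i:ℕ) + 1) / 2) - 1 + 1) / 2 = ((i:ℕ) + 1) / 2 := by omega
  have f2 : (2 * (((i:ℕ) + 1) / 2) - 1 + 1) % 2 = 0 := by omega
  have f3 : (2 * (((i:ℕ) + 1) / 2) + 1) / 2 = ((i:ℕ) + 1) / 2 := by omega
  have f4 : (2 * (((i:ℕ) + 1) / 2) + 1) % 2 = 1 := by omega
  have g1 : ¬ (2 * (((i:ℕ) + 1) / 2) - 1 = 0) := by omega
  have g2 : ¬ (2 * (((i:ℕ) + 1) / 2) - 1 = 2 * D - 1) := by omega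
  have g3 : ¬ (2 * (((i:ℕ) + 1) / 2) = 0) := by omega
  have g4 : ¬ (2 * (((i:ℕ) + 1) / 2) = 2 * D - 1) := by omega
  simp only [frakTp, frakTpinv, Matrix.of_apply, f0, f0', f1, f2, f3, f4, g1, g2, g3, g4,
    hi0, hi1, if_false, eq_self_iff_true, if_true, or_self, or_false, false_or]
  by_cases hk0 : (k:ℕ) = 0 ∨ (k:ℕ) = 2 * D - 1
  · rw [if_pos hk0, if_pos hk0, mul_zero, mul_zero, add_zero,
      if_neg (fun h : i = k => by rw [h] at hi0 hi1; omega)]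
  · rw [if_neg hk0, if_neg hk0]
    by_cases hkm : ((i:ℕ) + 1) / 2 = ((k:ℕ) + 1) / 2
    · rw [if_pos hkm, if_pos hkm,
        tp_prod hq (((i:ℕ) + 1) / 2) (((i:ℕ) + 1) % 2) (((k:ℕ) + 1) % 2) (by omega) (by omega)]
      by_cases hik : i = k
      · rw [if_pos hik, if_pos (by rw [hik])]
      · rw [if_neg hik, if_neg (fun h => hik (Fin.ext (by omega)))]
    · rw [if_neg hkm, if_neg hkm, mul_zero, mul_zero, add_zero,
        if_neg (fun h : i = k => hkm (by rw [h]))]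

lemma lemD {q D : ℕ} (hq : q ≠ 0) (hD : 1 ≤ D) :
    frakTp q D * Matrix.diagonal (dDiag q D) = frakU q D + 1 := by
  ext i k
  rw [Matrix.mul_diagonal, Matrix.add_apply, Matrix.one_apply]
  have hi := i.isLt
  have hk := k.isLt
  have hD0 : ¬ ((2:ℕ) * D - 1 = 0) := by omega
  simp only [frakTp, frakU, Matrix.of_apply]
  by_cases hi0 : (i:ℕ) = 0
  · rw [if_pos hi0, if_pos hi0]
    by_cases hk0 : (k:ℕ) = 0
    · rw [if_pos hk0, if_pos (Fin.ext (by omega) : i = k), dDiag,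
        if_pos (by omega : (k:ℕ) % 2 = 0), (by omega : (k:ℕ) / 2 = 0)]
      rw [show Complex.I * rr q (-(D:ℝ)/2) * (-Complex.I * rr q ((D:ℝ)/2 - ((0:ℕ):ℝ)))
          = -(Complex.I * Complex.I) * (rr q (-(D:ℝ)/2) * rr q ((D:ℝ)/2 - ((0:ℕ):ℝ))) by ring,
        Complex.I_mul_I, rr_cancel hq (by push_cast; ring)]
      norm_num
    · rw [if_neg hk0, zero_mul, if_neg (fun h : i = k => hk0 (by rw [← h]; exact hi0)), add_zero]
  · rw [if_neg hi0, if_neg hi0]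
    by_cases hi1 : (i:ℕ) = 2 * D - 1
    · rw [if_pos hi1, if_pos hi1]
      by_cases hk1 : (k:ℕ) = 2 * D - 1
      · rw [if_pos hk1, if_pos hk1, if_pos (Fin.ext (by omega) : i = k), dDiag,
          if_neg (by omega : ¬ ((k:ℕ) % 2 = 0))]
        ring
      · rw [if_neg hk1, if_neg hk1, zero_mul,
          if_neg (fun h : i = k => hk1 (by rw [← h]; exact hi1)), add_zero]
    · rw [if_neg hi1, if_neg hi1]
      by_cases hk01 : (k:ℕ) = 0 ∨ (k:ℕ) = 2 * D - 1
      · rw [if_pos hk01, if_pos hk01, zero_mul,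
          if_neg (fun h : i = k => by rw [h] at hi0 hi1; omega), add_zero]
      · rw [if_neg hk01, if_neg hk01]
        by_cases hkm : ((i:ℕ) + 1) / 2 = ((k:ℕ) + 1) / 2
        · rw [if_pos hkm, if_pos hkm]
          have hm1 : 1 ≤ ((i:ℕ) + 1) / 2 := by omega
          have hm2 : ((i:ℕ) + 1) / 2 ≤ D - 1 := by omega
          rcases Nat.mod_two_eq_zero_or_one ((k:ℕ) + 1) with hb | hb
          · -- k odd : diagonal entry 0
            rw [dDiag, if_neg (by omega : ¬ ((k:ℕ) % 2 = 0)), mul_zero, hb]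
            rcases Nat.mod_two_eq_zero_or_one ((i:ℕ) + 1) with ha | ha
            · have hik : i = k := Fin.ext (by omega)
              rw [ha, if_pos hik]
              simp [uEnt]
            · have hik : ¬ i = k := fun h => by rw [h] at ha; omega
              rw [ha, if_neg hik]
              simp [uEnt]
          · -- k even : dDiag k = -I rr (D/2 - k/2)
            have hk2 : ((k:ℕ) / 2 : ℕ) = ((i:ℕ) + 1) / 2 := by omega
            rw [dDiag, if_pos (by omega : (k:ℕ) % 2 = 0), hk2, hb]
            rcases Nat.mod_two_eq_zero_or_one ((i:ℕ) + 1) with ha | ha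
            · -- i odd, a = 0, b = 1 : value 1 - q^{D-m}
              have hik : ¬ i = k := fun h => by rw [h] at ha; omega
              rw [ha, if_neg hik, add_zero]
              simp only [tpEnt, uEnt, if_pos rfl, one_ne_zero, if_false, eq_self_iff_true,
                if_true]
              have r1 : rr q ((D:ℝ)/2) * rr q ((D:ℝ)/2 - ((((i:ℕ)+1)/2 : ℕ) : ℝ))
                  = rr q ((D:ℝ) - ((((i:ℕ)+1)/2 : ℕ) : ℝ)) := by
                rw [rr_mul hq]; ring_nf
              have r2 : rr q (((((i:ℕ)+1)/2 : ℕ) : ℝ) - (D:ℝ))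
                    * rr q ((D:ℝ) - ((((i:ℕ)+1)/2 : ℕ) : ℝ)) = 1 :=
                rr_cancel hq (by ring)
              have r3 : (q:ℂ) ^ (D - ((i:ℕ)+1)/2) = rr q ((D:ℝ) - ((((i:ℕ)+1)/2 : ℕ) : ℝ)) := by
                rw [rr_nat]
                congr 1
                push_cast [Nat.cast_sub (by omega : ((i:ℕ)+1)/2 ≤ D)]
                ring
              rw [r3]
              linear_combination
                (-(rr q ((D:ℝ)/2) * rr q ((D:ℝ)/2 - ((((i:ℕ)+1)/2 : ℕ) : ℝ))
                  * (rr q (((((i:ℕ)+1)/2 : ℕ) : ℝ) - (D:ℝ)) - 1))) * Complex.I_mul_I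
                + (rr q (((((i:ℕ)+1)/2 : ℕ) : ℝ) - (D:ℝ)) - 1) * r1
                + r2
            · -- i even, a = 1, b = 1 : value 1
              have hik : i = k := Fin.ext (by omega)
              rw [ha, if_pos hik]
              simp only [tpEnt, uEnt, one_ne_zero, if_false]
              have r2 : rr q ((((i:ℕ)+1)/2 : ℕ) - (D:ℝ)/2)
                    * rr q ((D:ℝ)/2 - ((((i:ℕ)+1)/2 : ℕ) : ℝ)) = 1 :=
                rr_cancel hq (by ring)
              linear_combination
                (-(rr q ((((i:ℕ)+1)/2 : ℕ) - (D:ℝ)/2)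
                  * rr q ((D:ℝ)/2 - ((((i:ℕ)+1)/2 : ℕ) : ℝ)))) * Complex.I_mul_I + r2
        · rw [if_neg hkm, if_neg hkm, zero_mul,
            if_neg (fun h : i = k => hkm (by rw [h])), add_zero]

/-- `𝔵 := 𝔱'𝔱` is invertible and `𝔵·𝔲' = 𝔲 + 1`. -/
theorem stmt_11 (q : ℕ) (hpp : IsPrimePow q) (D : ℕ) (hD : 3 ≤ D) (e : ℝ) (he : 0 ≤ e) :
    IsUnit (frakTp q D * frakT q D e) ∧
    (frakTp q D * frakT q D e) * frakUp q D e = frakU q D + 1 := by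
  have hq : q ≠ 0 := by
    have := hpp.two_le
    omega
  have hD1 : 1 ≤ D := by omega
  constructor
  · exact ((Matrix.isUnit_iff_isUnit_det _).mpr (Matrix.isUnit_det_of_right_inverse (lemB hq hD1))).mul
      ((Matrix.isUnit_iff_isUnit_det _).mpr (Matrix.isUnit_det_of_right_inverse (lemA hq e)))
  · rw [Matrix.mul_assoc, lemC hq e, lemD hq hD1]

end
end

section
/- Let q be a prime power, D ≥ 3, e ≥ 0, and τ = i·q^{-(D+e)/2}. With 𝔲, 𝔲', 𝔵 the 2D × 2D matrices of the nil-DAHA representation (as in Proposition 8.6 of the paper), one has 𝔲' = q·𝔲·𝔵. -/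
noncomputable section

/-! Block by block, `u(j) t'(j) = diag(-i q^{D/2-j}, 0)` (the corner `1 × 1` blocks give `0` and
`-i q^{-D/2}`), so `𝔲𝔱'` is diagonal, carrying `-i q^{D/2-j}` at the odd index `2j-1` and `0` at even
indices. Right multiplication by `𝔱` then keeps only row `2j-1` of `𝔱`, whose one nonzero entry is
`q^{-e/2}` in column `2j-2`; after the factor `q` this is the entry `-i q^{(D-e)/2-(j-1)}` of `𝔲'`. -/

section
variable {q D : ℕ}

lemma rr_add (hq : 0 < q) (x y : ℝ) : rr q (x + y) = rr q x * rr q y := by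
  simp only [rr, Real.rpow_add (Nat.cast_pos.mpr hq), Complex.ofReal_mul]

lemma rr_natCast (n : ℕ) : rr q n = (q : ℂ) ^ n := by
  simp [rr]

lemma rr_one : rr q 1 = q := by
  simp [rr]

lemma uEnt_mul_tpEnt_col_zero (hq : 0 < q) {j : ℕ} (hj : j ≤ D) :
    uEnt q D j 0 0 * tpEnt q D j 0 0 + uEnt q D j 0 1 * tpEnt q D j 1 0
      = -Complex.I * rr q ((D : ℝ) / 2 - j) := by
  have hexp : rr q (-(D : ℝ) / 2) * (q : ℂ) ^ (D - j) = rr q ((D : ℝ) / 2 - j) := by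
    rw [← rr_natCast, ← rr_add hq]
    push_cast [Nat.cast_sub hj]
    ring_nf
  have hpow : (q : ℂ) ^ (D - j) * (q : ℂ) ^ j = (q : ℂ) ^ D := by
    rw [← pow_add, Nat.sub_add_cancel hj]
  simp only [uEnt, tpEnt, if_true, one_ne_zero, if_false]
  linear_combination -Complex.I * hexp + Complex.I * rr q (-(D : ℝ) / 2) * hpow

lemma uEnt_mul_tpEnt_col_one (hq : 0 < q) {j : ℕ} (hj : j ≤ D) :
    uEnt q D j 0 0 * tpEnt q D j 0 1 + uEnt q D j 0 1 * tpEnt q D j 1 1 = 0 := by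
  have h₁ : rr q ((D : ℝ) / 2) * rr q ((j : ℝ) - D) = rr q ((j : ℝ) - D / 2) := by
    rw [← rr_add hq]; ring_nf
  have h₂ : (q : ℂ) ^ (D - j) * rr q ((j : ℝ) - D / 2) = rr q ((D : ℝ) / 2) := by
    rw [← rr_natCast, ← rr_add hq]
    push_cast [Nat.cast_sub hj]
    ring_nf
  simp only [uEnt, tpEnt, if_true, one_ne_zero, if_false]
  linear_combination -Complex.I * h₁ - Complex.I * h₂

variable {i : Fin (2 * D)}

lemma frakU_apply_of_even (hi : (i : ℕ) % 2 = 0) (k : Fin (2 * D)) : frakU q D i k = 0 := by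
  simp only [frakU, Matrix.of_apply, uEnt]
  split_ifs <;> first | rfl | omega

lemma frakU_apply_eq_zero {k : Fin (2 * D)} (h₁ : k ≠ i) (h₂ : (k : ℕ) ≠ i + 1) :
    frakU q D i k = 0 := by
  rw [Ne, Fin.ext_iff] at h₁
  simp only [frakU, Matrix.of_apply, uEnt]
  split_ifs <;> first | rfl | omega

lemma frakU_apply_self_of_odd (hi : (i : ℕ) % 2 = 1) : frakU q D i i = -1 := by
  simp only [frakU, Matrix.of_apply, uEnt]
  split_ifs <;> first | rfl | omega

lemma frakU_apply_succ_of_odd (hi : (i : ℕ) % 2 = 1) {k : Fin (2 * D)} (hk : (k : ℕ) = i + 1) :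
    frakU q D i k = uEnt q D ((i + 1) / 2) 0 1 := by
  simp only [frakU, Matrix.of_apply]
  split_ifs <;> first | rfl | omega | (congr 1 <;> omega)

lemma frakTp_apply_of_last (hi : (i : ℕ) = 2 * D - 1) (k : Fin (2 * D)) :
    frakTp q D i k = if k = i then Complex.I * rr q (-(D : ℝ) / 2) else 0 := by
  simp only [frakTp, Matrix.of_apply, Fin.ext_iff]
  split_ifs <;> first | rfl | omega

lemma frakTp_apply_of_odd (hi : (i : ℕ) % 2 = 1) (hlast : (i : ℕ) ≠ 2 * D - 1)
    (k : Fin (2 * D)) :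
    frakTp q D i k = if (k : ℕ) = i then tpEnt q D ((i + 1) / 2) 0 0
      else if (k : ℕ) = i + 1 then tpEnt q D ((i + 1) / 2) 0 1 else 0 := by
  simp only [frakTp, Matrix.of_apply]
  split_ifs <;> first | rfl | omega | (congr 1 <;> omega)

lemma frakTp_apply_succ_of_odd (hi : (i : ℕ) % 2 = 1) {r : Fin (2 * D)} (hr : (r : ℕ) = i + 1)
    (k : Fin (2 * D)) :
    frakTp q D r k = if (k : ℕ) = i then tpEnt q D ((i + 1) / 2) 1 0
      else if (k : ℕ) = i + 1 then tpEnt q D ((i + 1) / 2) 1 1 else 0 := by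
  simp only [frakTp, Matrix.of_apply]
  split_ifs <;> first | rfl | omega | (congr 1 <;> omega)

-- the odd index `i = 2j - 1` lies in the block `j = (i + 1) / 2` of `𝔲` and `𝔱'`
def frakUTpDiag (q D : ℕ) (i : Fin (2 * D)) : ℂ :=
  if (i : ℕ) % 2 = 1 then -Complex.I * rr q ((D : ℝ) / 2 - (((i : ℕ) + 1) / 2 : ℕ)) else 0

lemma frakU_mul_frakTp (hq : 0 < q) :
    frakU q D * frakTp q D = Matrix.diagonal (frakUTpDiag q D) := by
  ext i k
  rw [Matrix.mul_apply, Matrix.diagonal_apply]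
  rcases Nat.mod_two_eq_zero_or_one i with hi | hi
  · simp [frakU_apply_of_even hi, frakUTpDiag, hi]
  by_cases hlast : (i : ℕ) = 2 * D - 1
  · have hj : ((i : ℕ) + 1) / 2 = D := by omega
    rw [Fintype.sum_eq_single i fun c hc => by rw [frakU_apply_eq_zero hc (by omega), zero_mul],
      frakU_apply_self_of_odd hi, frakTp_apply_of_last hlast, frakUTpDiag, if_pos hi, hj]
    rcases eq_or_ne k i with rfl | hk
    · simp only [if_true]; ring_nf
    · simp [hk, hk.symm]
  have hlt : (i : ℕ) + 1 < 2 * D := by omega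
  have hj : ((i : ℕ) + 1) / 2 ≤ D := by omega
  rw [Fintype.sum_eq_add i ⟨i + 1, hlt⟩ (by simp [Fin.ext_iff])
      fun c hc => by rw [frakU_apply_eq_zero hc.1 (by simpa [Fin.ext_iff] using hc.2), zero_mul],
    frakU_apply_self_of_odd hi, frakU_apply_succ_of_odd hi rfl, frakTp_apply_of_odd hi hlast,
    frakTp_apply_succ_of_odd hi rfl, frakUTpDiag, if_pos hi]
  have hu : uEnt q D ((i + 1) / 2) 0 0 = -1 := rfl
  rw [← hu]
  by_cases hki : (k : ℕ) = i
  · rw [if_pos hki, if_pos hki, if_pos (Fin.ext hki.symm), uEnt_mul_tpEnt_col_zero hq hj]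
  · rw [if_neg hki, if_neg hki, if_neg fun h => hki (congrArg Fin.val h).symm]
    split_ifs
    · exact uEnt_mul_tpEnt_col_one hq hj
    · ring

variable {e : ℝ}

lemma frakT_apply_of_odd (hi : (i : ℕ) % 2 = 1) (k : Fin (2 * D)) :
    frakT q D e i k = if (k : ℕ) + 1 = i then rr q (-e / 2) else 0 := by
  simp only [frakT, Matrix.of_apply, tEnt]
  split_ifs <;> first | rfl | omega

lemma frakUp_apply_of_even (hi : (i : ℕ) % 2 = 0) (k : Fin (2 * D)) : frakUp q D e i k = 0 := by
  simp only [frakUp, Matrix.of_apply, upEnt]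
  split_ifs <;> first | rfl | omega

lemma frakUp_apply_of_odd (hi : (i : ℕ) % 2 = 1) (k : Fin (2 * D)) :
    frakUp q D e i k
      = if (k : ℕ) + 1 = i then -Complex.I * rr q (((D : ℝ) - e) / 2 - ((i : ℕ) / 2 : ℕ)) else 0 := by
  simp only [frakUp, Matrix.of_apply, upEnt]
  split_ifs <;> first | rfl | omega

end

theorem stmt_12_general (q : ℕ) (hpp : IsPrimePow q) (D : ℕ) (e : ℝ) :
    frakUp q D e = (q : ℂ) • (frakU q D * (frakTp q D * frakT q D e)) := by
  rw [← Matrix.mul_assoc, frakU_mul_frakTp hpp.pos]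
  ext i k
  rw [Matrix.smul_apply, Matrix.diagonal_mul, smul_eq_mul, frakUTpDiag]
  rcases Nat.mod_two_eq_zero_or_one i with hi | hi
  · rw [frakUp_apply_of_even hi, if_neg (by omega)]
    ring
  have hexp : (q : ℂ) * rr q ((D : ℝ) / 2 - (((i : ℕ) + 1) / 2 : ℕ)) * rr q (-e / 2)
      = rr q (((D : ℝ) - e) / 2 - ((i : ℕ) / 2 : ℕ)) := by
    rw [← rr_one, ← rr_add hpp.pos, ← rr_add hpp.pos, show ((i : ℕ) + 1) / 2 = i / 2 + 1 by omega]
    push_cast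
    ring_nf
  rw [frakUp_apply_of_odd hi, frakT_apply_of_odd hi, if_pos hi]
  split_ifs
  · linear_combination Complex.I * hexp
  · ring

/-- the relation `𝔲' = q·𝔲·𝔵` of Mazzocco's algebra `H_III` holds,
where `𝔵 = 𝔱'𝔱`. -/
theorem stmt_12 (q : ℕ) (hpp : IsPrimePow q) (D : ℕ) (hD : 3 ≤ D) (e : ℝ) (he : 0 ≤ e) :
    frakUp q D e = (q : ℂ) • (frakU q D * (frakTp q D * frakT q D e)) :=
  stmt_12_general q hpp D e

end
end

section
/- Let q > 1 real, D ≥ 3 an integer, e ≥ 0 real. For 1 ≤ i ≤ D-1 define Y_i = (-1)^i q^{i(D+e-i)} (q^{1-D};q)_i (1+q^D+q^{D+e-i}-q^{D-i}) / ((q;q)_i (-q^{e-i};q)_D (1+q^{D+e-2i})), Y_{-i} = (-1)^{i-1} q^{i(D+e-i-2)+D+e} (q^{1-D};q)_{i-1} (1+q^D+q^{i-e}-q^i) / ((q;q)_{i-1} (-q^{e-i+1};q)_D (1+q^{D+e-2i})), and Z_i = (-1)^i q^{i(D+e-i-1)+D} (q^{1-D};q)_i / ((q;q)_{i-1} (-q^{e-i+1};q)_{D-1}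 (1+q^{D+e-2i})). Also let M_i = (-1)^i q^{i(D+e-i+1)} (q^{-D};q)_i (1+q^{D+e-2i}) / ((q;q)_i (-q^{e-i};q)_{D+1}). Then Y_i + 2Z_i + Y_{-i} = M_i for all 1 ≤ i ≤ D-1. -/
/-!
Write `i = n + 1`, `a = q ^ i`, `b = q ^ D`, `c = q ^ e`. The four q-Pochhammer products in
`Y_i`, `Y_{-i}`, `Z_i`, `M_i` differ from `(q^{1-D};q)_{i-1}`, `(q;q)_{i-1}` and `(-q^{e-i};q)_D`
only by boundary factors, and every power of `q` is `q ^ (i * (D + e - i))` times a monomial in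
`a, b, c`. So each of the four quantities is one common factor times a rational function of
`a, b, c`, and the claim reduces to a rational identity in three variables.
-/

open Finset

theorem prod_range_succ_shift {M : Type*} [CommMonoid M] (g : ℝ → M) (x : ℝ) (n : ℕ) :
    ∏ k ∈ range (n + 1), g (x + k) = g x * ∏ k ∈ range n, g (x + 1 + k) := by
  rw [prod_range_succ', mul_comm]
  push_cast
  simp only [add_zero, add_comm (1:ℝ), add_assoc]

theorem rpow_one_sub_add {q : ℝ} (hq : 0 < q) (x y : ℝ) :
    q ^ (1 - x + y) = q ^ (y + 1) / q ^ x := by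
  rw [← Real.rpow_sub hq]
  ring_nf

noncomputable def yCoeff (q : ℝ) (D : ℕ) (e : ℝ) (i : ℕ) : ℝ :=
  (-1 : ℝ) ^ i * q ^ ((i : ℝ) * ((D : ℝ) + e - (i : ℝ))) *
      (∏ k ∈ range i, (1 - q ^ (1 - (D : ℝ) + (k : ℝ)))) *
      (1 + q ^ (D : ℝ) + q ^ ((D : ℝ) + e - (i : ℝ)) - q ^ ((D : ℝ) - (i : ℝ))) /
      ((∏ k ∈ range i, (1 - q ^ (k + 1))) *
        (∏ k ∈ range D, (1 + q ^ (e - (i : ℝ) + (k : ℝ)))) *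
        (1 + q ^ ((D : ℝ) + e - 2 * (i : ℝ))))

noncomputable def yNegCoeff (q : ℝ) (D : ℕ) (e : ℝ) (i : ℕ) : ℝ :=
  (-1 : ℝ) ^ (i - 1) *
      q ^ ((i : ℝ) * ((D : ℝ) + e - (i : ℝ) - 2) + (D : ℝ) + e) *
      (∏ k ∈ range (i - 1), (1 - q ^ (1 - (D : ℝ) + (k : ℝ)))) *
      (1 + q ^ (D : ℝ) + q ^ ((i : ℝ) - e) - q ^ (i : ℝ)) /
      ((∏ k ∈ range (i - 1), (1 - q ^ (k + 1))) *
        (∏ k ∈ range D, (1 + q ^ (e - (i : ℝ) + 1 + (k : ℝ)))) *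
        (1 + q ^ ((D : ℝ) + e - 2 * (i : ℝ))))

noncomputable def zCoeff (q : ℝ) (D : ℕ) (e : ℝ) (i : ℕ) : ℝ :=
  (-1 : ℝ) ^ i *
      q ^ ((i : ℝ) * ((D : ℝ) + e - (i : ℝ) - 1) + (D : ℝ)) *
      (∏ k ∈ range i, (1 - q ^ (1 - (D : ℝ) + (k : ℝ)))) /
      ((∏ k ∈ range (i - 1), (1 - q ^ (k + 1))) *
        (∏ k ∈ range (D - 1), (1 + q ^ (e - (i : ℝ) + 1 + (k : ℝ)))) *
        (1 + q ^ ((D : ℝ) + e - 2 * (i : ℝ))))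

noncomputable def mCoeff (q : ℝ) (D : ℕ) (e : ℝ) (i : ℕ) : ℝ :=
  (-1 : ℝ) ^ i * q ^ ((i : ℝ) * ((D : ℝ) + e - (i : ℝ) + 1)) *
      (∏ k ∈ range i, (1 - q ^ ((k : ℝ) - (D : ℝ)))) * (1 + q ^ ((D : ℝ) + e - 2 * (i : ℝ))) /
      ((∏ k ∈ range i, (1 - q ^ (k + 1))) *
        (∏ k ∈ range (D + 1), (1 + q ^ (e - (i : ℝ) + (k : ℝ)))))

noncomputable def commonFactor (q : ℝ) (D : ℕ) (e : ℝ) (n : ℕ) : ℝ :=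
  (-1 : ℝ) ^ (n + 1) * q ^ (((n : ℝ) + 1) * ((D : ℝ) + e - ((n : ℝ) + 1))) *
      (∏ k ∈ range n, (1 - q ^ (1 - (D : ℝ) + (k : ℝ)))) /
      ((∏ k ∈ range n, (1 - q ^ (k + 1))) *
        (∏ k ∈ range D, (1 + q ^ (e - ((n : ℝ) + 1) + (k : ℝ)))) *
        (1 + q ^ ((D : ℝ) + e - 2 * ((n : ℝ) + 1))))

theorem yCoeff_succ {q : ℝ} (hq : 0 < q) (D : ℕ) (e : ℝ) (n : ℕ) :
    yCoeff q D e (n + 1) = commonFactor q D e n *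
      ((1 - q ^ ((n : ℝ) + 1) / q ^ (D : ℝ)) *
        (1 + q ^ (D : ℝ) + q ^ (D : ℝ) * q ^ e / q ^ ((n : ℝ) + 1) - q ^ (D : ℝ) / q ^ ((n : ℝ) + 1))
        / (1 - q ^ ((n : ℝ) + 1))) := by
  have hQ : q ^ (n + 1) = q ^ ((n : ℝ) + 1) := by norm_cast
  have hde : q ^ ((D : ℝ) + e - ((n : ℝ) + 1)) = q ^ (D : ℝ) * q ^ e / q ^ ((n : ℝ) + 1) := by
    rw [Real.rpow_sub hq, Real.rpow_add hq]
  have hd : q ^ ((D : ℝ) - ((n : ℝ) + 1)) = q ^ (D : ℝ) / q ^ ((n : ℝ) + 1) := Real.rpow_sub hq _ _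
  unfold yCoeff commonFactor
  push_cast
  rw [prod_range_succ, prod_range_succ, rpow_one_sub_add hq, hQ, hde, hd]
  -- split inverses of products first: `ring` would otherwise invert the expanded denominator
  simp only [div_eq_mul_inv, mul_inv]
  ring

theorem yNegCoeff_succ {q : ℝ} (hq : 0 < q) (D : ℕ) (e : ℝ) (n : ℕ) :
    yNegCoeff q D e (n + 1) = commonFactor q D e n *
      (-(q ^ (D : ℝ) * q ^ e / (q ^ ((n : ℝ) + 1) * q ^ ((n : ℝ) + 1))) *
        (1 + q ^ (D : ℝ) + q ^ ((n : ℝ) + 1) / q ^ e - q ^ ((n : ℝ) + 1)) *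
        (1 + q ^ e / q ^ ((n : ℝ) + 1)) / (1 + q ^ e / q ^ ((n : ℝ) + 1) * q ^ (D : ℝ))) := by
  have hg0 : 1 + q ^ (e - ((n : ℝ) + 1)) ≠ 0 := by positivity
  have hG : ∏ k ∈ range D, (1 + q ^ (e - ((n : ℝ) + 1) + 1 + k)) =
      (∏ k ∈ range D, (1 + q ^ (e - ((n : ℝ) + 1) + k))) * (1 + q ^ (e - ((n : ℝ) + 1) + D)) /
        (1 + q ^ (e - ((n : ℝ) + 1))) := by
    rw [eq_div_iff hg0, mul_comm, ← prod_range_succ_shift (fun x => 1 + q ^ x), prod_range_succ]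
  have hpow : q ^ (((n : ℝ) + 1) * ((D : ℝ) + e - ((n : ℝ) + 1) - 2) + D + e) =
      q ^ (((n : ℝ) + 1) * ((D : ℝ) + e - ((n : ℝ) + 1))) * (q ^ (D : ℝ) * q ^ e) /
        (q ^ ((n : ℝ) + 1) * q ^ ((n : ℝ) + 1)) := by
    rw [← Real.rpow_add hq, ← Real.rpow_add hq, ← Real.rpow_add hq, ← Real.rpow_sub hq]
    ring_nf
  unfold yNegCoeff commonFactor
  push_cast
  rw [hG, hpow, Real.rpow_sub hq ((n : ℝ) + 1) e, Real.rpow_add hq (e - _), Real.rpow_sub hq e,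
    pow_succ]
  simp only [div_eq_mul_inv, mul_inv, inv_inv]
  ring

theorem zCoeff_succ {q : ℝ} (hq : 0 < q) {D : ℕ} (hD : 1 ≤ D) (e : ℝ) (n : ℕ) :
    zCoeff q D e (n + 1) = commonFactor q D e n *
      (q ^ (D : ℝ) / q ^ ((n : ℝ) + 1) * (1 - q ^ ((n : ℝ) + 1) / q ^ (D : ℝ)) *
        (1 + q ^ e / q ^ ((n : ℝ) + 1))) := by
  have hg0 : 1 + q ^ (e - ((n : ℝ) + 1)) ≠ 0 := by positivity
  have hG : ∏ k ∈ range (D - 1), (1 + q ^ (e - ((n : ℝ) + 1) + 1 + k)) =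
      (∏ k ∈ range D, (1 + q ^ (e - ((n : ℝ) + 1) + k))) / (1 + q ^ (e - ((n : ℝ) + 1))) := by
    rw [eq_div_iff hg0, mul_comm, ← prod_range_succ_shift (fun x => 1 + q ^ x),
      Nat.sub_add_cancel hD]
  have hpow : q ^ (((n : ℝ) + 1) * ((D : ℝ) + e - ((n : ℝ) + 1) - 1) + D) =
      q ^ (((n : ℝ) + 1) * ((D : ℝ) + e - ((n : ℝ) + 1))) * q ^ (D : ℝ) / q ^ ((n : ℝ) + 1) := by
    rw [← Real.rpow_add hq, ← Real.rpow_sub hq]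
    ring_nf
  unfold zCoeff commonFactor
  push_cast
  rw [hG, hpow, prod_range_succ, rpow_one_sub_add hq, Real.rpow_sub hq e]
  simp only [div_eq_mul_inv, mul_inv, inv_inv]
  ring

theorem mCoeff_succ {q : ℝ} (hq : 0 < q) (D : ℕ) (e : ℝ) (n : ℕ) :
    mCoeff q D e (n + 1) = commonFactor q D e n *
      (q ^ ((n : ℝ) + 1) * (1 - 1 / q ^ (D : ℝ)) *
        (1 + q ^ (D : ℝ) * q ^ e / (q ^ ((n : ℝ) + 1) * q ^ ((n : ℝ) + 1))) ^ 2 /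
        ((1 - q ^ ((n : ℝ) + 1)) * (1 + q ^ e / q ^ ((n : ℝ) + 1) * q ^ (D : ℝ)))) := by
  have hs : q ^ ((D : ℝ) + e - 2 * ((n : ℝ) + 1)) =
      q ^ (D : ℝ) * q ^ e / (q ^ ((n : ℝ) + 1) * q ^ ((n : ℝ) + 1)) := by
    rw [← Real.rpow_add hq, ← Real.rpow_add hq, ← Real.rpow_sub hq]
    ring_nf
  have hpow : q ^ (((n : ℝ) + 1) * ((D : ℝ) + e - ((n : ℝ) + 1) + 1)) =
      q ^ (((n : ℝ) + 1) * ((D : ℝ) + e - ((n : ℝ) + 1))) * q ^ ((n : ℝ) + 1) := by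
    rw [← Real.rpow_add hq]
    ring_nf
  have hP : ∏ k ∈ range (n + 1), (1 - q ^ ((k : ℝ) - D)) =
      (1 - 1 / q ^ (D : ℝ)) * ∏ k ∈ range n, (1 - q ^ (1 - (D : ℝ) + k)) := by
    rw [prod_range_succ', mul_comm]
    push_cast
    rw [zero_sub, Real.rpow_neg hq.le, inv_eq_one_div]
    congr 2 with k
    ring_nf
  have hQ : q ^ (n + 1) = q ^ ((n : ℝ) + 1) := by norm_cast
  have hsq : 1 + q ^ (D : ℝ) * q ^ e / (q ^ ((n : ℝ) + 1) * q ^ ((n : ℝ) + 1)) ≠ 0 := by positivity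
  unfold mCoeff commonFactor
  rw [hP]
  push_cast
  rw [prod_range_succ, prod_range_succ, hs, hpow, hQ, Real.rpow_add hq (e - _), Real.rpow_sub hq e]
  field_simp

theorem coeff_rational_identity {a b c : ℝ} (ha : a ≠ 0) (hb : b ≠ 0) (hc : c ≠ 0) (ha1 : a ≠ 1)
    (habc : a + b * c ≠ 0) :
    (1 - a / b) * (1 + b + b * c / a - b / a) / (1 - a) + 2 * (b / a * (1 - a / b) * (1 + c / a)) +
        -(b * c / (a * a)) * (1 + b + a / c - a) * (1 + c / a) / (1 + c / a * b) =
      a * (1 - 1 / b) * (1 + b * c / (a * a)) ^ 2 / ((1 - a) * (1 + c / a * b)) := by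
  have h1a : 1 - a ≠ 0 := sub_ne_zero.mpr (Ne.symm ha1)
  have hgD : 1 + c / a * b ≠ 0 := by
    rwa [div_mul_eq_mul_div, one_add_div ha, div_ne_zero_iff, mul_comm c, and_iff_left ha]
  field_simp
  ring

theorem yCoeff_add_two_zCoeff_add_yNegCoeff {q : ℝ} (hq : 1 < q) {D : ℕ} (hD : 1 ≤ D) (e : ℝ)
    (n : ℕ) :
    yCoeff q D e (n + 1) + 2 * zCoeff q D e (n + 1) + yNegCoeff q D e (n + 1) =
      mCoeff q D e (n + 1) := by
  have hq0 : 0 < q := one_pos.trans hq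
  have ha1 : q ^ ((n : ℝ) + 1) ≠ 1 := (Real.one_lt_rpow hq (by positivity)).ne'
  have habc : q ^ ((n : ℝ) + 1) + q ^ (D : ℝ) * q ^ e ≠ 0 := by positivity
  rw [yCoeff_succ hq0, zCoeff_succ hq0 hD, yNegCoeff_succ hq0, mCoeff_succ hq0,
    ← coeff_rational_identity (by positivity) (by positivity) (by positivity) ha1 habc]
  ring

open Finset in
theorem stmt_19_general (q : ℝ) (hq : 1 < q) (D : ℕ) (e : ℝ)
    (Y Ym Z M : ℕ → ℝ)
    (hY : ∀ i, Y i = (-1 : ℝ) ^ i * q ^ ((i : ℝ) * ((D : ℝ) + e - (i : ℝ))) *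
      (∏ k ∈ range i, (1 - q ^ (1 - (D : ℝ) + (k : ℝ)))) *
      (1 + q ^ (D : ℝ) + q ^ ((D : ℝ) + e - (i : ℝ)) - q ^ ((D : ℝ) - (i : ℝ))) /
      ((∏ k ∈ range i, (1 - q ^ (k + 1))) *
        (∏ k ∈ range D, (1 + q ^ (e - (i : ℝ) + (k : ℝ)))) *
        (1 + q ^ ((D : ℝ) + e - 2 * (i : ℝ)))))
    (hYm : ∀ i, Ym i = (-1 : ℝ) ^ (i - 1) *
      q ^ ((i : ℝ) * ((D : ℝ) + e - (i : ℝ) - 2) + (D : ℝ) + e) *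
      (∏ k ∈ range (i - 1), (1 - q ^ (1 - (D : ℝ) + (k : ℝ)))) *
      (1 + q ^ (D : ℝ) + q ^ ((i : ℝ) - e) - q ^ (i : ℝ)) /
      ((∏ k ∈ range (i - 1), (1 - q ^ (k + 1))) *
        (∏ k ∈ range D, (1 + q ^ (e - (i : ℝ) + 1 + (k : ℝ)))) *
        (1 + q ^ ((D : ℝ) + e - 2 * (i : ℝ)))))
    (hZ : ∀ i, Z i = (-1 : ℝ) ^ i *
      q ^ ((i : ℝ) * ((D : ℝ) + e - (i : ℝ) - 1) + (D : ℝ)) *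
      (∏ k ∈ range i, (1 - q ^ (1 - (D : ℝ) + (k : ℝ)))) /
      ((∏ k ∈ range (i - 1), (1 - q ^ (k + 1))) *
        (∏ k ∈ range (D - 1), (1 + q ^ (e - (i : ℝ) + 1 + (k : ℝ)))) *
        (1 + q ^ ((D : ℝ) + e - 2 * (i : ℝ)))))
    (hM : ∀ i, M i = (-1 : ℝ) ^ i * q ^ ((i : ℝ) * ((D : ℝ) + e - (i : ℝ) + 1)) *
      (∏ k ∈ range i, (1 - q ^ ((k : ℝ) - (D : ℝ)))) * (1 + q ^ ((D : ℝ) + e - 2 * (i : ℝ))) /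
      ((∏ k ∈ range i, (1 - q ^ (k + 1))) *
        (∏ k ∈ range (D + 1), (1 + q ^ (e - (i : ℝ) + (k : ℝ)))))) :
    ∀ i, 1 ≤ i → i ≤ D - 1 → Y i + 2 * Z i + Ym i = M i := by
  intro i hi hiD
  obtain ⟨n, rfl⟩ := Nat.exists_eq_add_of_le' hi
  rw [hY, hZ, hYm, hM]
  exact yCoeff_add_two_zCoeff_add_yNegCoeff hq (by omega) e n

open Finset in
/-- the identity `Y_i + 2Z_i + Y_{-i} = M_i`, encoding
`‖y_i‖² + 2⟨y_i, y_{-i}⟩ + ‖y_{-i}‖² = ‖E_i x̂‖²`. -/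
theorem stmt_19 (q : ℝ) (hq : 1 < q) (D : ℕ) (hD : 3 ≤ D) (e : ℝ) (he : 0 ≤ e)
    (Y Ym Z M : ℕ → ℝ)
    (hY : ∀ i, Y i = (-1 : ℝ) ^ i * q ^ ((i : ℝ) * ((D : ℝ) + e - (i : ℝ))) *
      (∏ k ∈ range i, (1 - q ^ (1 - (D : ℝ) + (k : ℝ)))) *
      (1 + q ^ (D : ℝ) + q ^ ((D : ℝ) + e - (i : ℝ)) - q ^ ((D : ℝ) - (i : ℝ))) /
      ((∏ k ∈ range i, (1 - q ^ (k + 1))) *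
        (∏ k ∈ range D, (1 + q ^ (e - (i : ℝ) + (k : ℝ)))) *
        (1 + q ^ ((D : ℝ) + e - 2 * (i : ℝ)))))
    (hYm : ∀ i, Ym i = (-1 : ℝ) ^ (i - 1) *
      q ^ ((i : ℝ) * ((D : ℝ) + e - (i : ℝ) - 2) + (D : ℝ) + e) *
      (∏ k ∈ range (i - 1), (1 - q ^ (1 - (D : ℝ) + (k : ℝ)))) *
      (1 + q ^ (D : ℝ) + q ^ ((i : ℝ) - e) - q ^ (i : ℝ)) /
      ((∏ k ∈ range (i - 1), (1 - q ^ (k + 1))) *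
        (∏ k ∈ range D, (1 + q ^ (e - (i : ℝ) + 1 + (k : ℝ)))) *
        (1 + q ^ ((D : ℝ) + e - 2 * (i : ℝ)))))
    (hZ : ∀ i, Z i = (-1 : ℝ) ^ i *
      q ^ ((i : ℝ) * ((D : ℝ) + e - (i : ℝ) - 1) + (D : ℝ)) *
      (∏ k ∈ range i, (1 - q ^ (1 - (D : ℝ) + (k : ℝ)))) /
      ((∏ k ∈ range (i - 1), (1 - q ^ (k + 1))) *
        (∏ k ∈ range (D - 1), (1 + q ^ (e - (i : ℝ) + 1 + (k : ℝ)))) *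
        (1 + q ^ ((D : ℝ) + e - 2 * (i : ℝ)))))
    (hM : ∀ i, M i = (-1 : ℝ) ^ i * q ^ ((i : ℝ) * ((D : ℝ) + e - (i : ℝ) + 1)) *
      (∏ k ∈ range i, (1 - q ^ ((k : ℝ) - (D : ℝ)))) * (1 + q ^ ((D : ℝ) + e - 2 * (i : ℝ))) /
      ((∏ k ∈ range i, (1 - q ^ (k + 1))) *
        (∏ k ∈ range (D + 1), (1 + q ^ (e - (i : ℝ) + (k : ℝ)))))) :
    ∀ i, 1 ≤ i → i ≤ D - 1 → Y i + 2 * Z i + Ym i = M i :=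
  stmt_19_general q hq D e Y Ym Z M hY hYm hZ hM
end
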